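/- (Thirring's inequality) Let H be a self-adjoint operator on a Hilbert space ℋ such that E₁ := min σ(H) is a simple eigenvalue with normalized eigenvector ψ, and let E₂ := inf(σ(H) \ {E₁}) > E₁. Let V be a bounded, positive, invertible operator on ℋ with ⟨ψ, V⁻¹ψ⟩ > 0. Then min{E₁ + ⟨ψ, V⁻¹ψ⟩⁻¹, E₂} ≤ inf σ(H + V). -/

import Mathlib

set_option maxHeartbeats 1000000
set_option synthInstance.maxHeartbeats 200000

open scoped RealInnerProductSpace

namespace ThirringAux

variable {F : Type*} [NormedAddCommGroup F] [InnerProductSpace ℝ F] [CompleteSpace F]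

lemma symm_inner {T : F →L[ℝ] F} (hT : IsSelfAdjoint T) (x y : F) :
    ⟪T x, y⟫ = ⟪x, T y⟫ :=
  (ContinuousLinearMap.isSelfAdjoint_iff_isSymmetric.mp hT) x y

lemma inv_comm {A : Type*} [Ring A] {a b : A} (h : IsUnit b) (hc : a * b = b * a) :
    a * Ring.inverse b = Ring.inverse b * a := by
  have h1 := Ring.inverse_mul_cancel b h
  have h2 := Ring.mul_inverse_cancel b h
  calc a * Ring.inverse b = Ring.inverse b * b * (a * Ring.inverse b) := by rw [h1, one_mul]
    _ = Ring.inverse b * (b * a) * Ring.inverse b := by simp only [mul_assoc]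
    _ = Ring.inverse b * (a * b) * Ring.inverse b := by rw [hc]
    _ = Ring.inverse b * a * (b * Ring.inverse b) := by simp only [mul_assoc]
    _ = Ring.inverse b * a := by rw [h2, mul_one]

lemma isUnit_of_norm_coercive {T : F →L[ℝ] F} (hT : IsSelfAdjoint T) {c : ℝ}
    (hc : 0 < c) (h : ∀ x, c * ‖x‖ ≤ ‖T x‖) : IsUnit T := by
  rw [ContinuousLinearMap.isUnit_iff_bijective,
    ContinuousLinearMap.bijective_iff_dense_range_and_antilipschitz]
  constructor
  · rw [Submodule.topologicalClosure_eq_top_iff, Submodule.eq_bot_iff]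
    intro x hx
    have hTx : T x = 0 := by
      have h2 := (Submodule.mem_orthogonal _ x).mp hx (T (T x)) ⟨T x, rfl⟩
      rw [symm_inner hT (T x) x] at h2
      exact inner_self_eq_zero.mp h2
    have h3 := h x
    rw [hTx, norm_zero] at h3
    have h4 : ‖x‖ = 0 := le_antisymm (by nlinarith [norm_nonneg x]) (norm_nonneg x)
    exact norm_eq_zero.mp h4
  · refine ⟨⟨c⁻¹, by positivity⟩, T.antilipschitz_of_bound fun x => ?_⟩
    have h1 := h x
    change ‖x‖ ≤ c⁻¹ * ‖T x‖
    have h2 : ‖x‖ ≤ ‖T x‖ / c := by rw [le_div_iff₀ hc]; linarith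
    simpa [div_eq_inv_mul] using h2

lemma not_isUnit_of_approx {T : F →L[ℝ] F}
    (h : ∀ δ : ℝ, 0 < δ → ∃ x : F, ‖x‖ = 1 ∧ ‖T x‖ < δ) : ¬ IsUnit T := by
  intro hu
  obtain ⟨u, hu'⟩ := hu
  set S : F →L[ℝ] F := ↑u⁻¹ with hS
  obtain ⟨x, hx1, hx2⟩ := h (1 / (‖S‖ + 1)) (by positivity)
  have hSx : S (T x) = x := by
    have h1 : (S * ↑u) x = x := by rw [hS, u.inv_mul, ContinuousLinearMap.one_apply]
    rw [ContinuousLinearMap.mul_apply, hu'] at h1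
    exact h1
  have h2 : ‖x‖ ≤ ‖S‖ * ‖T x‖ := by
    calc ‖x‖ = ‖S (T x)‖ := by rw [hSx]
      _ ≤ ‖S‖ * ‖T x‖ := S.le_opNorm _
  rw [hx1] at h2
  have hSn : 0 ≤ ‖S‖ := norm_nonneg _
  have hTn : 0 ≤ ‖T x‖ := norm_nonneg _
  have h3 : ‖S‖ * ‖T x‖ ≤ ‖S‖ * (1 / (‖S‖ + 1)) := mul_le_mul_of_nonneg_left hx2.le hSn
  have h4 : ‖S‖ * (1 / (‖S‖ + 1)) < 1 := by
    rw [mul_one_div, div_lt_one (by positivity)]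
    linarith
  linarith

lemma exists_approx_of_not_isUnit {T : F →L[ℝ] F} (hT : IsSelfAdjoint T)
    (h : ¬ IsUnit T) {δ : ℝ} (hδ : 0 < δ) : ∃ x : F, ‖x‖ = 1 ∧ ‖T x‖ < δ := by
  by_contra hc
  push_neg at hc
  apply h
  apply isUnit_of_norm_coercive hT hδ
  intro x
  rcases eq_or_ne x 0 with h0 | h0
  · simp [h0]
  · have hx : 0 < ‖x‖ := norm_pos_iff.mpr h0
    have h1 : ‖(‖x‖⁻¹ • x)‖ = 1 := by
      rw [norm_smul, Real.norm_eq_abs, abs_of_nonneg (by positivity)]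
      field_simp
    have h2 := hc _ h1
    rw [map_smul, norm_smul, Real.norm_eq_abs, abs_of_nonneg (by positivity),
      inv_mul_eq_div, le_div_iff₀ hx] at h2
    linarith

lemma isUnit_of_form_coercive (T : F →L[ℝ] F) {c : ℝ} (hc : 0 < c)
    (h : ∀ x, c * ‖x‖ ^ 2 ≤ ⟪x, T x⟫) : IsUnit T := by
  apply ContinuousLinearMap.isUnit_of_forall_le_norm_inner_map T (c := ⟨c, hc.le⟩)
    (by exact_mod_cast hc)
  intro x
  change ‖x‖ ^ 2 * c ≤ ‖(⟪T x, x⟫ : ℝ)‖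
  have h1 := h x
  have h2 : ⟪x, T x⟫ ≤ ‖(⟪T x, x⟫ : ℝ)‖ := by
    rw [Real.norm_eq_abs, real_inner_comm]
    exact le_abs_self _
  nlinarith [sq_nonneg ‖x‖]

lemma four_inner {T : F →L[ℝ] F} (hT : IsSelfAdjoint T) (x y : F) :
    4 * ⟪T x, y⟫ = ⟪x + y, T (x + y)⟫ - ⟪x - y, T (x - y)⟫ := by
  have h1 : ⟪y, T x⟫ = ⟪T x, y⟫ := real_inner_comm _ _
  have h2 : ⟪x, T y⟫ = ⟪T x, y⟫ := (symm_inner hT x y).symm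
  simp only [map_add, map_sub, inner_add_left, inner_add_right, inner_sub_left, inner_sub_right]
  linarith

lemma norm_le_of_form_bound {T : F →L[ℝ] F} (hT : IsSelfAdjoint T) {c : ℝ} (hc : 0 ≤ c)
    (h : ∀ x, |⟪x, T x⟫| ≤ c * ‖x‖ ^ 2) : ‖T‖ ≤ c := by
  refine ContinuousLinearMap.opNorm_le_bound T hc fun x => ?_
  rcases eq_or_ne (T x) 0 with h0 | h0
  · rw [h0, norm_zero]; positivity
  · have hx0 : x ≠ 0 := by intro h'; rw [h', map_zero] at h0; exact h0 rfl
    have hxn : 0 < ‖x‖ := norm_pos_iff.mpr hx0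
    have hTxn : 0 < ‖T x‖ := norm_pos_iff.mpr h0
    set y := (‖x‖ / ‖T x‖) • T x with hy
    have hyn : ‖y‖ = ‖x‖ := by
      rw [hy, norm_smul, Real.norm_eq_abs, abs_of_nonneg (by positivity),
        div_mul_cancel₀ _ hTxn.ne']
    have key : ⟪T x, y⟫ = ‖x‖ * ‖T x‖ := by
      rw [hy, real_inner_smul_right, real_inner_self_eq_norm_sq]
      field_simp
    have hpar : ‖x + y‖ ^ 2 + ‖x - y‖ ^ 2 = 2 * (‖x‖ ^ 2 + ‖y‖ ^ 2) := by
      have := parallelogram_law_with_norm ℝ x y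
      nlinarith [this]
    have h4 := four_inner hT x y
    have habs : |4 * ⟪T x, y⟫| ≤ c * ‖x + y‖ ^ 2 + c * ‖x - y‖ ^ 2 := by
      rw [h4]
      exact (abs_sub _ _).trans (add_le_add (h (x + y)) (h (x - y)))
    rw [abs_mul, abs_of_nonneg (by norm_num : (0:ℝ) ≤ 4), key,
      abs_of_nonneg (by positivity)] at habs
    rw [hyn] at hpar
    nlinarith

lemma form_cauchy_schwarz {T : F →L[ℝ] F} (hT : IsSelfAdjoint T)
    (hpos : ∀ x, 0 ≤ ⟪x, T x⟫) (x y : F) :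
    ⟪x, T y⟫ ^ 2 ≤ ⟪x, T x⟫ * ⟪y, T y⟫ := by
  have key : ∀ t : ℝ, 0 ≤ ⟪y, T y⟫ * (t * t) + (2 * ⟪x, T y⟫) * t + ⟪x, T x⟫ := by
    intro t
    have h0 := hpos (x + t • y)
    have h1 : ⟪y, T x⟫ = ⟪x, T y⟫ :=
      calc ⟪y, T x⟫ = ⟪T y, x⟫ := (symm_inner hT y x).symm
        _ = ⟪x, T y⟫ := real_inner_comm _ _
    simp only [map_add, map_smul, inner_add_left, inner_add_right, real_inner_smul_left,
      real_inner_smul_right] at h0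
    rw [h1] at h0
    ring_nf at h0 ⊢
    linarith
  have hd := discrim_le_zero key
  rw [discrim] at hd
  nlinarith [hd]

lemma exists_inf_form_mem_spectrum [Nontrivial F] {T : F →L[ℝ] F} (hT : IsSelfAdjoint T) :
    ∃ m : ℝ, m ∈ spectrum ℝ T ∧ ∀ x, m * ‖x‖ ^ 2 ≤ ⟪x, T x⟫ := by
  obtain ⟨v, hv⟩ := exists_ne (0 : F)
  have hvn : 0 < ‖v‖ := norm_pos_iff.mpr hv
  set S : Set ℝ := (fun x => ⟪x, T x⟫) '' {x : F | ‖x‖ = 1} with hSdef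
  have hSne : S.Nonempty := by
    refine ⟨⟪‖v‖⁻¹ • v, T (‖v‖⁻¹ • v)⟫, ⟨‖v‖⁻¹ • v, ?_, rfl⟩⟩
    simp only [Set.mem_setOf_eq]
    rw [norm_smul, Real.norm_eq_abs, abs_of_nonneg (by positivity)]
    field_simp
  have hSbdd : BddBelow S := by
    refine ⟨-‖T‖, fun s hs => ?_⟩
    obtain ⟨x, hx, rfl⟩ := hs
    have h1 : |⟪x, T x⟫| ≤ ‖x‖ * ‖T x‖ := abs_real_inner_le_norm _ _
    have h2 : ‖T x‖ ≤ ‖T‖ * ‖x‖ := T.le_opNorm x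
    rw [Set.mem_setOf_eq] at hx
    rw [hx] at h1 h2
    simp only [one_mul, mul_one] at h1 h2
    have := neg_abs_le (⟪x, T x⟫ : ℝ)
    linarith
  set m := sInf S with hm
  have hunit : ∀ x : F, ‖x‖ = 1 → m ≤ ⟪x, T x⟫ := fun x hx => csInf_le hSbdd ⟨x, hx, rfl⟩
  have hform : ∀ x, m * ‖x‖ ^ 2 ≤ ⟪x, T x⟫ := by
    intro x
    rcases eq_or_ne x 0 with h0 | h0
    · simp [h0]
    · have hx : 0 < ‖x‖ := norm_pos_iff.mpr h0
      have h1 : ‖(‖x‖⁻¹ • x)‖ = 1 := by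
        rw [norm_smul, Real.norm_eq_abs, abs_of_nonneg (by positivity)]; field_simp
      have h2 := hunit _ h1
      rw [map_smul, real_inner_smul_left, real_inner_smul_right] at h2
      have h3 : m ≤ ‖x‖⁻¹ * (‖x‖⁻¹ * ⟪x, T x⟫) := h2
      have hne : ‖x‖ ≠ 0 := hx.ne'
      have h4 : m * ‖x‖ ^ 2 ≤ (‖x‖⁻¹ * (‖x‖⁻¹ * ⟪x, T x⟫)) * ‖x‖ ^ 2 :=
        mul_le_mul_of_nonneg_right h3 (by positivity)
      have h5 : (‖x‖⁻¹ * (‖x‖⁻¹ * ⟪x, T x⟫)) * ‖x‖ ^ 2 = ⟪x, T x⟫ := by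
        calc (‖x‖⁻¹ * (‖x‖⁻¹ * ⟪x, T x⟫)) * ‖x‖ ^ 2
            = ⟪x, T x⟫ * ((‖x‖ * ‖x‖⁻¹) * (‖x‖ * ‖x‖⁻¹)) := by ring
          _ = ⟪x, T x⟫ := by rw [mul_inv_cancel₀ hne]; ring
      rw [h5] at h4
      exact h4
  refine ⟨m, ?_, hform⟩
  rw [spectrum.mem_iff]
  intro hu
  set B : F →L[ℝ] F := T - m • 1 with hB
  have hBsa : IsSelfAdjoint B :=
    hT.sub (IsSelfAdjoint.smul (star_trivial m) (IsSelfAdjoint.one (F →L[ℝ] F)))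
  have hBapp : ∀ x, B x = T x - m • x := fun x => by
    simp [hB, ContinuousLinearMap.sub_apply, ContinuousLinearMap.smul_apply,
      ContinuousLinearMap.one_apply]
  have hBform : ∀ x, 0 ≤ ⟪x, B x⟫ := by
    intro x
    rw [hBapp, inner_sub_right, real_inner_smul_right, real_inner_self_eq_norm_sq]
    linarith [hform x]
  have hBunit : IsUnit B := by
    have heq : B = -(algebraMap ℝ (F →L[ℝ] F) m - T) := by
      rw [Algebra.algebraMap_eq_smul_one, neg_sub, hB]
    rw [heq]
    exact hu.neg
  -- B is bounded below since it is a unit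
  obtain ⟨u, hu'⟩ := hBunit
  set Si : F →L[ℝ] F := ↑u⁻¹ with hSi
  have hlow : ∀ z, ‖z‖ ≤ ‖Si‖ * ‖B z‖ := by
    intro z
    have h1 : (Si * ↑u) z = z := by rw [hSi, u.inv_mul, ContinuousLinearMap.one_apply]
    rw [ContinuousLinearMap.mul_apply, hu'] at h1
    calc ‖z‖ = ‖Si (B z)‖ := by rw [h1]
      _ ≤ ‖Si‖ * ‖B z‖ := Si.le_opNorm _
  -- CS estimate : ‖B z‖^2 ≤ ‖B‖ * ⟪z, B z⟫
  have hBz : ∀ z, ‖B z‖ ^ 2 ≤ ‖B‖ * ⟪z, B z⟫ := by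
    intro z
    have hcs := form_cauchy_schwarz hBsa hBform z (B z)
    have h1 : ⟪z, B (B z)⟫ = ‖B z‖ ^ 2 := by
      rw [← symm_inner hBsa z (B z), real_inner_comm, real_inner_self_eq_norm_sq]
    have h2 : ⟪B z, B (B z)⟫ ≤ ‖B z‖ * (‖B‖ * ‖B z‖) := by
      calc ⟪B z, B (B z)⟫ ≤ ‖B z‖ * ‖B (B z)‖ := real_inner_le_norm _ _
        _ ≤ ‖B z‖ * (‖B‖ * ‖B z‖) := by
            have := B.le_opNorm (B z)
            nlinarith [norm_nonneg (B z)]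
    rw [h1] at hcs
    rcases eq_or_ne (B z) 0 with h0 | h0
    · simp [h0]
    · have hBzn : 0 < ‖B z‖ := norm_pos_iff.mpr h0
      nlinarith [mul_le_mul_of_nonneg_left h2 (hBform z), hcs, mul_pos hBzn hBzn,
        hBform z, norm_nonneg B]
  -- choose an almost-minimizer
  set ε : ℝ := 1 / ((‖B‖ + 1) * (‖Si‖ + 1) ^ 2) with hε
  have hεpos : 0 < ε := by positivity
  obtain ⟨s, hs, hslt⟩ := Real.lt_sInf_add_pos hSne hεpos
  obtain ⟨z, hz, rfl⟩ := hs
  rw [Set.mem_setOf_eq] at hz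
  have h5 : ⟪z, B z⟫ < ε := by
    rw [hBapp, inner_sub_right, real_inner_smul_right, real_inner_self_eq_norm_sq, hz]
    simp only [one_pow, mul_one]
    rw [← hm] at hslt
    linarith
  have h6 : ‖B z‖ ^ 2 < (‖B‖ + 1) * ε := by
    have := hBz z
    nlinarith [hBform z, norm_nonneg B]
  have h7 : ‖z‖ ≤ ‖Si‖ * ‖B z‖ := hlow z
  rw [hz] at h7
  have h8 : (‖B‖ + 1) * ε = 1 / (‖Si‖ + 1) ^ 2 := by
    rw [hε]; field_simp
  rw [h8] at h6
  have h9 : 0 ≤ ‖B z‖ := norm_nonneg _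
  have h10 : 0 ≤ ‖Si‖ := norm_nonneg _
  have hpos1 : 0 < 1 / (‖Si‖ + 1) := by positivity
  have hsq : (1 / (‖Si‖ + 1)) ^ 2 = 1 / (‖Si‖ + 1) ^ 2 := by
    rw [div_pow, one_pow]
  rw [← hsq] at h6
  have h11 : ‖B z‖ < 1 / (‖Si‖ + 1) := by nlinarith [h9, hpos1]
  have h12 : ‖Si‖ * (1 / (‖Si‖ + 1)) < 1 := by
    rw [mul_one_div, div_lt_one (by positivity)]
    linarith
  have h13 : ‖Si‖ * ‖B z‖ ≤ ‖Si‖ * (1 / (‖Si‖ + 1)) := mul_le_mul_of_nonneg_left h11.le h10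
  linarith

lemma spectrum_ge_of_form_ge {T : F →L[ℝ] F} (hT : IsSelfAdjoint T) {m : ℝ}
    (h : ∀ x, m * ‖x‖ ^ 2 ≤ ⟪x, T x⟫) : ∀ μ ∈ spectrum ℝ T, m ≤ μ := by
  intro μ hμ
  by_contra hlt
  push_neg at hlt
  rw [spectrum.mem_iff] at hμ
  apply hμ
  have h1 : IsUnit (T - μ • (1 : F →L[ℝ] F)) := by
    apply isUnit_of_form_coercive _ (show (0:ℝ) < m - μ by linarith)
    intro x
    have h2 := h x
    rw [ContinuousLinearMap.sub_apply, ContinuousLinearMap.smul_apply,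
      ContinuousLinearMap.one_apply, inner_sub_right, real_inner_smul_right,
      real_inner_self_eq_norm_sq]
    nlinarith [sq_nonneg ‖x‖]
  have heq : algebraMap ℝ (F →L[ℝ] F) μ - T = -(T - μ • 1) := by
    rw [Algebra.algebraMap_eq_smul_one, neg_sub]
  rw [heq]
  exact h1.neg

lemma form_ge_of_spectrum_ge {T : F →L[ℝ] F} (hT : IsSelfAdjoint T) {m : ℝ}
    (h : ∀ μ ∈ spectrum ℝ T, m ≤ μ) : ∀ x, m * ‖x‖ ^ 2 ≤ ⟪x, T x⟫ := by
  rcases subsingleton_or_nontrivial F with hF | hF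
  · intro x
    have hx : x = 0 := Subsingleton.elim x 0
    simp [hx]
  · obtain ⟨m₀, hm₀, hform⟩ := exists_inf_form_mem_spectrum hT
    intro x
    have h1 := h m₀ hm₀
    nlinarith [hform x, sq_nonneg ‖x‖]

lemma expand_sub {A : Type*} [Ring A] [Algebra ℝ A] (T : A) (p q : ℝ) :
    (T - p • 1) * (T - q • 1) = T * T - (p + q) • T + (p * q) • 1 := by
  rw [mul_sub, sub_mul, sub_mul, smul_mul_assoc, mul_smul_comm, smul_mul_assoc]
  simp only [one_mul, mul_one, smul_smul]
  module

lemma expand_add {A : Type*} [Ring A] [Algebra ℝ A] (T : A) (p q : ℝ) :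
    (T + p • 1) * (T + q • 1) = T * T + (p + q) • T + (p * q) • 1 := by
  rw [mul_add, add_mul, add_mul, smul_mul_assoc, mul_smul_comm, smul_mul_assoc]
  simp only [one_mul, mul_one, smul_smul]
  module

lemma isUnit_smul_one {A : Type*} [Ring A] [Algebra ℝ A] {c : ℝ} (hc : c ≠ 0) :
    IsUnit (c • (1 : A)) := by
  refine isUnit_iff_exists.mpr ⟨c⁻¹ • (1 : A), ?_, ?_⟩ <;>
    simp [smul_mul_smul_comm, smul_smul, mul_inv_cancel₀ hc, inv_mul_cancel₀ hc]

lemma gap_form_bound {T : F →L[ℝ] F} (hT : IsSelfAdjoint T) {g : ℝ} (hg : 0 < g)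
    (hform : ∀ x, 0 ≤ ⟪x, T x⟫)
    (hunit : ∀ t : ℝ, t ≠ 0 → t < g → IsUnit (T - t • (1 : F →L[ℝ] F)))
    {ψ : F} (hψ : ‖ψ‖ = 1) (hTψ : T ψ = 0)
    (hsimple : ∀ φ : F, T φ = 0 → ∃ c : ℝ, φ = c • ψ) :
    ∀ y : F, ⟪ψ, y⟫ = 0 → g * ‖y‖ ^ 2 ≤ ⟪y, T y⟫ := by
  -- spectrum of T is contained in {0} ∪ [g, ∞)
  have hTspec : ∀ t : ℝ, t ∈ spectrum ℝ T → t = 0 ∨ g ≤ t := by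
    intro t ht
    by_contra hcon
    push_neg at hcon
    obtain ⟨ht0, htg⟩ := hcon
    rw [spectrum.mem_iff] at ht
    apply ht
    have heq : algebraMap ℝ (F →L[ℝ] F) t - T = -(T - t • 1) := by
      rw [Algebra.algebraMap_eq_smul_one, neg_sub]
    rw [heq]
    exact (hunit t ht0 htg).neg
  -- resolvents
  have hTinv : ∀ ε : ℝ, 0 < ε → IsUnit (T + ε • (1 : F →L[ℝ] F)) := by
    intro ε hε
    apply isUnit_of_form_coercive _ hε
    intro x
    simp only [ContinuousLinearMap.add_apply, ContinuousLinearMap.smul_apply,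
      ContinuousLinearMap.one_apply, inner_add_right, real_inner_smul_right,
      real_inner_self_eq_norm_sq]
    linarith [hform x]
  set Re : ℝ → (F →L[ℝ] F) := fun ε => Ring.inverse (T + ε • 1) with hRe
  have hReDef : ∀ ε : ℝ, Re ε = Ring.inverse (T + ε • 1) := fun ε => by rw [hRe]
  have hReL : ∀ ε : ℝ, 0 < ε → Re ε * (T + ε • 1) = 1 := fun ε hε => by
    rw [hReDef ε]; exact Ring.inverse_mul_cancel _ (hTinv ε hε)
  have hReR : ∀ ε : ℝ, 0 < ε → (T + ε • 1) * Re ε = 1 := fun ε hε => by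
    rw [hReDef ε]; exact Ring.mul_inverse_cancel _ (hTinv ε hε)
  have hTcomm : ∀ ε η : ℝ, (T + ε • (1:F →L[ℝ] F)) * (T + η • 1) = (T + η • 1) * (T + ε • 1) := by
    intro ε η
    rw [expand_add, expand_add, add_comm η ε, mul_comm η ε]
  have hcommT : ∀ ε : ℝ, 0 < ε → T * Re ε = Re ε * T := by
    intro ε hε
    have hc : T * (T + ε • (1:F →L[ℝ] F)) = (T + ε • 1) * T := by
      rw [mul_add, add_mul, mul_smul_comm, smul_mul_assoc, mul_one, one_mul]
    rw [hReDef ε]; exact inv_comm (hTinv ε hε) hc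
  have hcommTe : ∀ ε η : ℝ, 0 < η → (T + ε • (1:F →L[ℝ] F)) * Re η = Re η * (T + ε • 1) := by
    intro ε η hη
    rw [hReDef η]; exact inv_comm (hTinv η hη) (hTcomm ε η)
  have hcommRR : ∀ ε η : ℝ, 0 < ε → 0 < η → Re ε * Re η = Re η * Re ε := by
    intro ε η hε hη
    rw [hReDef η]; exact inv_comm (hTinv η hη) ((hcommTe η ε hε).symm)
  have hResa : ∀ ε : ℝ, 0 < ε → IsSelfAdjoint (Re ε) := by
    intro ε hε
    have hsa : IsSelfAdjoint (T + ε • (1:F →L[ℝ] F)) :=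
      hT.add (IsSelfAdjoint.smul (star_trivial ε) (IsSelfAdjoint.one (F →L[ℝ] F)))
    show star (Re ε) = Re ε
    rw [hReDef ε, ← Ring.inverse_star, hsa.star_eq]
  have hdecomp : ∀ ε : ℝ, 0 < ε → ∀ x : F, x = T (Re ε x) + ε • (Re ε x) := by
    intro ε hε x
    have h1 : ((T + ε • 1) * Re ε) x = x := by rw [hReR ε hε, ContinuousLinearMap.one_apply]
    rw [ContinuousLinearMap.mul_apply, ContinuousLinearMap.add_apply,
      ContinuousLinearMap.smul_apply, ContinuousLinearMap.one_apply] at h1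
    exact h1.symm
  -- quadratic form bounds for the resolvent
  have hfRe : ∀ ε : ℝ, 0 < ε → ∀ x : F,
      0 ≤ ⟪x, Re ε x⟫ ∧ ε * ⟪x, Re ε x⟫ ≤ ‖x‖ ^ 2 ∧ ⟪x, Re ε x⟫ ≤ ‖x‖ ^ 2 / ε := by
    intro ε hε x
    have hx := hdecomp ε hε x
    set u := Re ε x with hu
    have hq : (0:ℝ) ≤ ⟪u, T u⟫ := hform u
    have hcm : ⟪T u, u⟫ = ⟪u, T u⟫ := real_inner_comm _ _
    have hinner : ⟪x, u⟫ = ⟪u, T u⟫ + ε * ‖u‖ ^ 2 := by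
      conv_lhs => rw [hx]
      rw [inner_add_left, real_inner_smul_left, real_inner_self_eq_norm_sq, hcm]
    have hnx : ‖x‖ ^ 2 = ‖T u‖ ^ 2 + 2 * ε * ⟪u, T u⟫ + ε ^ 2 * ‖u‖ ^ 2 := by
      have h2 : ‖x‖ ^ 2 = ⟪x, x⟫ := (real_inner_self_eq_norm_sq x).symm
      rw [h2]
      conv_lhs => rw [hx]
      simp only [real_inner_add_add_self]
      simp only [real_inner_smul_left, real_inner_smul_right]
      simp only [real_inner_self_eq_norm_sq]
      rw [hcm]
      ring
    have hTu2 : (0:ℝ) ≤ ‖T u‖ ^ 2 := sq_nonneg _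
    have hu2 : (0:ℝ) ≤ ‖u‖ ^ 2 := sq_nonneg _
    refine ⟨?_, ?_, ?_⟩
    · rw [hinner]
      nlinarith [mul_nonneg hε.le hu2]
    · rw [hinner, hnx]
      nlinarith [mul_nonneg hε.le hq, mul_nonneg (mul_nonneg hε.le hε.le) hu2]
    · rw [le_div_iff₀ hε, hinner, hnx]
      nlinarith [mul_nonneg hε.le hq, mul_nonneg (mul_nonneg hε.le hε.le) hu2]
  set pe : ℝ → (F →L[ℝ] F) := fun ε => ε • Re ε with hpe
  have hpeapp : ∀ (ε : ℝ) (x : F), pe ε x = ε • Re ε x := by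
    intro ε x; rw [hpe]; rfl
  have hpesa : ∀ ε : ℝ, 0 < ε → IsSelfAdjoint (pe ε) := by
    intro ε hε
    have := IsSelfAdjoint.smul (star_trivial ε) (hResa ε hε)
    rw [hpe]; exact this
  have hpef : ∀ ε : ℝ, 0 < ε → ∀ x : F, 0 ≤ ⟪x, pe ε x⟫ ∧ ⟪x, pe ε x⟫ ≤ ‖x‖ ^ 2 := by
    intro ε hε x
    obtain ⟨h1, h2, _⟩ := hfRe ε hε x
    have h4 : ⟪x, pe ε x⟫ = ε * ⟪x, Re ε x⟫ := by rw [hpeapp, real_inner_smul_right]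
    exact ⟨by rw [h4]; exact mul_nonneg hε.le h1, by rw [h4]; exact h2⟩
  have hpenorm : ∀ ε : ℝ, 0 < ε → ‖pe ε‖ ≤ 1 := by
    intro ε hε
    apply norm_le_of_form_bound (hpesa ε hε) zero_le_one
    intro x
    obtain ⟨h1, h2⟩ := hpef ε hε x
    rw [abs_of_nonneg h1, one_mul]
    exact h2
  have honepe : ∀ ε : ℝ, 0 < ε → ‖(1:F →L[ℝ] F) - pe ε‖ ≤ 1 := by
    intro ε hε
    apply norm_le_of_form_bound ((IsSelfAdjoint.one (F →L[ℝ] F)).sub (hpesa ε hε)) zero_le_one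
    intro x
    obtain ⟨h1, h2⟩ := hpef ε hε x
    rw [ContinuousLinearMap.sub_apply, ContinuousLinearMap.one_apply, inner_sub_right,
      real_inner_self_eq_norm_sq, one_mul, abs_le]
    constructor <;> nlinarith [sq_nonneg ‖x‖]
  have hRenorm : ∀ ε : ℝ, 0 < ε → ‖Re ε‖ ≤ 1 / ε := by
    intro ε hε
    apply norm_le_of_form_bound (hResa ε hε) (by positivity)
    intro x
    obtain ⟨h1, _, h3⟩ := hfRe ε hε x
    rw [abs_of_nonneg h1]
    calc ⟪x, Re ε x⟫ ≤ ‖x‖ ^ 2 / ε := h3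
      _ = 1 / ε * ‖x‖ ^ 2 := by ring
  -- the key uniform bound  ‖Re ε * T * Re η‖ ≤ 1/g
  have hRDR : ∀ ε η : ℝ, 0 < ε → 0 < η → ‖Re ε * T * Re η‖ ≤ 1 / g := by
    intro ε η hε hη
    have hRsa : IsSelfAdjoint (Re ε * T * Re η) := by
      show star _ = _
      rw [star_mul, star_mul, (hResa η hη).star_eq, hT.star_eq, (hResa ε hε).star_eq]
      calc Re η * (T * Re ε) = Re η * (Re ε * T) := by rw [hcommT ε hε]
        _ = Re η * Re ε * T := by rw [mul_assoc]
        _ = Re ε * Re η * T := by rw [← hcommRR ε η hε hη]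
        _ = Re ε * (Re η * T) := by rw [mul_assoc]
        _ = Re ε * (T * Re η) := by rw [← hcommT η hη]
        _ = Re ε * T * Re η := by rw [mul_assoc]
    have hRform : ∀ x, 0 ≤ ⟪x, (Re ε * T * Re η) x⟫ := by
      intro x
      set b := (Re ε * Re η) x with hb
      have hRT : Re ε * T * Re η = T * (Re ε * Re η) := by
        rw [← hcommT ε hε, mul_assoc]
      have hXid : (T * T + (ε + η) • T + (ε * η) • (1:F →L[ℝ] F)) * (Re ε * Re η) = 1 := by
        rw [← expand_add T ε η]
        calc (T + ε • (1:F →L[ℝ] F)) * (T + η • 1) * (Re ε * Re η)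
            = (T + ε • 1) * (((T + η • 1) * Re ε) * Re η) := by simp only [mul_assoc]
          _ = (T + ε • 1) * ((Re ε * (T + η • 1)) * Re η) := by rw [hcommTe η ε hε]
          _ = ((T + ε • 1) * Re ε) * ((T + η • 1) * Re η) := by simp only [mul_assoc]
          _ = 1 := by rw [hReR ε hε, hReR η hη, one_mul]
      have hxb : (T * T + (ε + η) • T + (ε * η) • (1:F →L[ℝ] F)) b = x := by
        have h2 := congrArg (fun (A : F →L[ℝ] F) => A x) hXid
        rw [hb]
        simpa [ContinuousLinearMap.mul_apply] using h2
      have hRxb : (Re ε * T * Re η) x = T b := by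
        rw [hRT]; rw [hb]; rfl
      rw [hRxb, ← hxb]
      rw [ContinuousLinearMap.add_apply, ContinuousLinearMap.add_apply,
        ContinuousLinearMap.mul_apply, ContinuousLinearMap.smul_apply,
        ContinuousLinearMap.smul_apply, ContinuousLinearMap.one_apply,
        inner_add_left, inner_add_left, real_inner_smul_left, real_inner_smul_left]
      have e1 : ⟪T (T b), T b⟫ = ⟪T b, T (T b)⟫ := real_inner_comm _ _
      have e2 : (0:ℝ) ≤ ⟪T b, T (T b)⟫ := hform (T b)
      have e3 : (0:ℝ) ≤ ⟪T b, T b⟫ := real_inner_self_nonneg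
      have e4 : (0:ℝ) ≤ ⟪b, T b⟫ := hform b
      nlinarith [mul_nonneg (by positivity : (0:ℝ) ≤ ε + η) e3,
        mul_nonneg (mul_pos hε hη).le e4]
    have hRunit : ∀ μ : ℝ, 1 / g < μ → IsUnit (Re ε * T * Re η - μ • 1) := by
      intro μ hμ
      have hge : (0:ℝ) < 1 / g := by positivity
      have hμpos : 0 < μ := lt_trans hge hμ
      have hμg : 1 < μ * g := (div_lt_iff₀ hg).mp hμ
      have hμne : μ ≠ 0 := hμpos.ne'
      obtain ⟨s, hμs⟩ : ∃ s : ℝ, μ * s = 1 - μ * (ε + η) :=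
        ⟨(1 - μ * (ε + η)) / μ, by field_simp⟩
      have hWeq : T - μ • (T * T + (ε + η) • T + (ε * η) • (1:F →L[ℝ] F))
          = (-μ) • (T * T - s • T + (ε * η) • (1:F →L[ℝ] F)) := by
        match_scalars <;> (try ring) <;> linarith [hμs]
      have hkey : IsUnit (T * T - s • T + (ε * η) • (1:F →L[ℝ] F)) := by
        rcases lt_or_ge (s ^ 2 - 4 * (ε * η)) 0 with hdisc | hdisc
        · have hid : T * T - s • T + (ε * η) • (1:F →L[ℝ] F)
              = (T - (s / 2) • 1) * (T - (s / 2) • 1) + (ε * η - (s / 2) ^ 2) • 1 := by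
            rw [expand_sub]
            match_scalars <;> ring
          rw [hid]
          apply isUnit_of_form_coercive _ (show (0:ℝ) < ε * η - (s / 2) ^ 2 by nlinarith)
          intro x
          rw [ContinuousLinearMap.add_apply, ContinuousLinearMap.mul_apply,
            ContinuousLinearMap.smul_apply, ContinuousLinearMap.one_apply,
            inner_add_right, real_inner_smul_right, real_inner_self_eq_norm_sq]
          have hsub : IsSelfAdjoint (T - (s / 2) • (1:F →L[ℝ] F)) :=
            hT.sub (IsSelfAdjoint.smul (star_trivial _) (IsSelfAdjoint.one (F →L[ℝ] F)))
          have h2 : ⟪x, (T - (s / 2) • (1:F →L[ℝ] F)) ((T - (s / 2) • 1) x)⟫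
              = ‖(T - (s / 2) • (1:F →L[ℝ] F)) x‖ ^ 2 := by
            rw [← symm_inner hsub, real_inner_self_eq_norm_sq]
          rw [h2]
          nlinarith [sq_nonneg ‖(T - (s / 2) • (1:F →L[ℝ] F)) x‖, sq_nonneg ‖x‖]
        · set rt := Real.sqrt (s ^ 2 - 4 * (ε * η)) with hrt
          have hrt2 : rt ^ 2 = s ^ 2 - 4 * (ε * η) := Real.sq_sqrt hdisc
          have hrtnn : 0 ≤ rt := Real.sqrt_nonneg _
          set aa := (s + rt) / 2 with haa
          set bb := (s - rt) / 2 with hbb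
          have hprod : aa * bb = ε * η := by rw [haa, hbb]; nlinarith [hrt2]
          have hsum : aa + bb = s := by rw [haa, hbb]; ring
          have hid : T * T - s • T + (ε * η) • (1:F →L[ℝ] F) = (T - aa • 1) * (T - bb • 1) := by
            rw [expand_sub, hsum, hprod]
          have hroot : ∀ t : ℝ, t = aa ∨ t = bb → (t ≠ 0 ∧ t < g) := by
            intro t ht
            have h0 : t ^ 2 - s * t + ε * η = 0 := by
              rcases ht with h | h <;> subst h <;> [rw [haa]; rw [hbb]] <;> nlinarith [hrt2]
            have hteq : μ * ((t + ε) * (t + η)) = t := by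
              have h5 : μ * (t ^ 2 + (ε + η) * t + ε * η) = t := by
                linear_combination μ * h0 + t * hμs
              calc μ * ((t + ε) * (t + η)) = μ * (t ^ 2 + (ε + η) * t + ε * η) := by ring
                _ = t := h5
            constructor
            · intro h0'
              rw [h0'] at hteq
              nlinarith [mul_pos hε hη, hμpos, mul_pos hμpos (mul_pos hε hη)]
            · by_contra hge2
              push_neg at hge2
              have htpos : 0 < t := lt_of_lt_of_le hg hge2
              nlinarith [hteq,
                mul_nonneg (mul_nonneg hμpos.le (sub_nonneg.mpr hge2)) htpos.le,
                mul_pos (sub_pos.mpr hμg) htpos,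
                mul_pos hμpos (mul_pos hε hη),
                mul_pos hμpos (mul_pos (add_pos hε hη) htpos)]
          rw [hid]
          exact (hunit aa (hroot aa (Or.inl rfl)).1 (hroot aa (Or.inl rfl)).2).mul
            (hunit bb (hroot bb (Or.inr rfl)).1 (hroot bb (Or.inr rfl)).2)
      have hW : IsUnit (T - μ • (T * T + (ε + η) • T + (ε * η) • (1:F →L[ℝ] F))) := by
        rw [hWeq]
        have hsmul : IsUnit ((-μ) • (1:F →L[ℝ] F)) :=
          isUnit_smul_one (neg_ne_zero.mpr hμpos.ne')
        have hfact : (-μ) • (T * T - s • T + (ε * η) • (1:F →L[ℝ] F))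
            = ((-μ) • (1:F →L[ℝ] F)) * (T * T - s • T + (ε * η) • 1) := by
          rw [smul_mul_assoc, one_mul]
        rw [hfact]
        exact hsmul.mul hkey
      have hid2 : Re ε * (T - μ • (T * T + (ε + η) • T + (ε * η) • (1:F →L[ℝ] F))) * Re η
          = Re ε * T * Re η - μ • 1 := by
        rw [mul_sub, sub_mul]
        congr 1
        rw [mul_smul_comm, smul_mul_assoc]
        have h6 : Re ε * (T * T + (ε + η) • T + (ε * η) • (1:F →L[ℝ] F)) * Re η = 1 := by
          rw [← expand_add T ε η]
          calc Re ε * ((T + ε • (1:F →L[ℝ] F)) * (T + η • 1)) * Re η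
              = (Re ε * (T + ε • 1)) * ((T + η • 1) * Re η) := by simp only [mul_assoc]
            _ = 1 := by rw [hReL ε hε, hReR η hη, one_mul]
        rw [h6]
      rw [← hid2]
      have hReu : IsUnit (Re ε) := by rw [hReDef ε]; exact (hTinv ε hε).ringInverse
      have hReu' : IsUnit (Re η) := by rw [hReDef η]; exact (hTinv η hη).ringInverse
      exact (hReu.mul hW).mul hReu'
    have hub : ∀ x, ⟪x, (Re ε * T * Re η) x⟫ ≤ 1 / g * ‖x‖ ^ 2 := by
      have hsa2 : IsSelfAdjoint ((1 / g) • (1:F →L[ℝ] F) - Re ε * T * Re η) :=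
        (IsSelfAdjoint.smul (star_trivial _) (IsSelfAdjoint.one (F →L[ℝ] F))).sub hRsa
      have hspec2 : ∀ ν ∈ spectrum ℝ ((1 / g) • (1:F →L[ℝ] F) - Re ε * T * Re η), (0:ℝ) ≤ ν := by
        intro ν hν
        by_contra hneg
        push_neg at hneg
        rw [spectrum.mem_iff] at hν
        apply hν
        have heq2 : algebraMap ℝ (F →L[ℝ] F) ν - ((1 / g) • (1:F →L[ℝ] F) - Re ε * T * Re η)
            = Re ε * T * Re η - (1 / g - ν) • 1 := by
          rw [Algebra.algebraMap_eq_smul_one, sub_smul]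
          abel
        rw [heq2]
        exact hRunit _ (by linarith)
      have h3 := form_ge_of_spectrum_ge hsa2 hspec2
      intro x
      have h4 := h3 x
      rw [ContinuousLinearMap.sub_apply, ContinuousLinearMap.smul_apply,
        ContinuousLinearMap.one_apply, inner_sub_right, real_inner_smul_right,
        real_inner_self_eq_norm_sq] at h4
      simp only [zero_mul] at h4
      linarith
    apply norm_le_of_form_bound hRsa (by positivity)
    intro x
    rw [abs_le]
    constructor
    · have h5 : (0:ℝ) ≤ 1 / g * ‖x‖ ^ 2 := by positivity
      linarith [hRform x]
    · exact hub x
  -- Cauchy estimate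
  have hpediff : ∀ ε η : ℝ, 0 < ε → 0 < η → ‖pe ε - pe η‖ ≤ |ε - η| / g := by
    intro ε η hε hη
    have hid : pe ε - pe η = (ε - η) • (Re ε * T * Re η) := by
      have h1 : (ε - η) • (Re ε * T * Re η) = Re ε * ((ε - η) • T) * Re η := by
        rw [mul_smul_comm, smul_mul_assoc]
      have h2 : (ε - η) • T = ε • (T + η • (1:F →L[ℝ] F)) - η • (T + ε • 1) := by
        module
      rw [h1, h2, mul_sub, sub_mul]
      rw [mul_smul_comm, mul_smul_comm, smul_mul_assoc, smul_mul_assoc]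
      rw [mul_assoc, hReR η hη, mul_one, hReL ε hε, one_mul]
    rw [hid]
    refine le_trans (norm_smul_le (ε - η) (Re ε * T * Re η)) ?_
    rw [Real.norm_eq_abs]
    calc |ε - η| * ‖Re ε * T * Re η‖ ≤ |ε - η| * (1 / g) :=
        mul_le_mul_of_nonneg_left (hRDR ε η hε hη) (abs_nonneg _)
      _ = |ε - η| / g := by rw [mul_one_div]
  -- limit projection
  set aseq : ℕ → ℝ := fun n => 1 / (n + 1) with haseq
  have hapos : ∀ n : ℕ, 0 < aseq n := fun n => by rw [haseq]; positivity
  have hamono : ∀ N n : ℕ, N ≤ n → aseq n ≤ aseq N := by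
    intro N n h
    rw [haseq]
    apply one_div_le_one_div_of_le (by positivity)
    have : (N:ℝ) ≤ (n:ℝ) := Nat.cast_le.mpr h
    linarith
  have hatend : Filter.Tendsto aseq Filter.atTop (nhds 0) := by
    rw [haseq]; exact tendsto_one_div_add_atTop_nhds_zero_nat
  set Pseq : ℕ → (F →L[ℝ] F) := fun n => pe (aseq n) with hPseq
  have hcauchy : CauchySeq Pseq := by
    apply cauchySeq_of_le_tendsto_0 (fun N => aseq N / g)
    · intro n m N hn hm
      rw [dist_eq_norm]
      calc ‖Pseq n - Pseq m‖ ≤ |aseq n - aseq m| / g := hpediff _ _ (hapos n) (hapos m)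
        _ ≤ aseq N / g := by
            have h1 : |aseq n - aseq m| ≤ aseq N := by
              rw [abs_sub_le_iff]
              constructor <;> nlinarith [hapos n, hapos m, hamono N n hn, hamono N m hm]
            gcongr
    · simpa using hatend.div_const g
  obtain ⟨P₀, hP₀⟩ := cauchySeq_tendsto_of_complete hcauchy
  have happly : ∀ x : F, Filter.Tendsto (fun n => Pseq n x) Filter.atTop (nhds (P₀ x)) := by
    intro x
    have h1 := ((ContinuousLinearMap.apply ℝ F x).continuous.tendsto P₀).comp hP₀
    exact h1
  have hpeψ : ∀ ε : ℝ, 0 < ε → pe ε ψ = ψ := by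
    intro ε hε
    have h1 : (T + ε • (1:F →L[ℝ] F)) ψ = ε • ψ := by
      rw [ContinuousLinearMap.add_apply, ContinuousLinearMap.smul_apply,
        ContinuousLinearMap.one_apply, hTψ, zero_add]
    have h2 : (Re ε * (T + ε • 1)) ψ = ψ := by rw [hReL ε hε, ContinuousLinearMap.one_apply]
    rw [ContinuousLinearMap.mul_apply, h1, map_smul] at h2
    rw [hpeapp]
    exact h2
  have hP₀ψ : P₀ ψ = ψ := by
    have h1 : Filter.Tendsto (fun n => Pseq n ψ) Filter.atTop (nhds ψ) := by
      have h2 : (fun n => Pseq n ψ) = fun _ => ψ := funext fun n => hpeψ _ (hapos n)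
      rw [h2]; exact tendsto_const_nhds
    exact tendsto_nhds_unique (happly ψ) h1
  have hTpe : ∀ ε : ℝ, 0 < ε → T * pe ε = ε • (1 - pe ε) := by
    intro ε hε
    have h3 := hReR ε hε
    rw [add_mul, smul_mul_assoc, one_mul] at h3
    have h2 : T * Re ε = 1 - ε • Re ε := by
      rw [← h3]; abel
    calc T * pe ε = T * (ε • Re ε) := by rw [hpe]
      _ = ε • (T * Re ε) := by rw [mul_smul_comm]
      _ = ε • ((1:F →L[ℝ] F) - ε • Re ε) := by rw [h2]
      _ = ε • ((1:F →L[ℝ] F) - pe ε) := by rw [hpe]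
  have hTP₀ : T * P₀ = 0 := by
    have h4 : Filter.Tendsto (fun n => T * Pseq n) Filter.atTop (nhds (T * P₀)) :=
      hP₀.const_mul T
    have hbnd : ∀ n, ‖T * Pseq n‖ ≤ aseq n := by
      intro n
      show ‖T * pe (aseq n)‖ ≤ aseq n
      refine le_trans ?_ (mul_one (aseq n)).le
      rw [hTpe _ (hapos n)]
      refine le_trans (norm_smul_le (aseq n) ((1:F →L[ℝ] F) - pe (aseq n))) ?_
      rw [Real.norm_eq_abs, abs_of_pos (hapos n)]
      exact mul_le_mul_of_nonneg_left (honepe _ (hapos n)) (hapos n).le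
    have h5 : Filter.Tendsto (fun n => T * Pseq n) Filter.atTop (nhds 0) :=
      squeeze_zero_norm hbnd hatend
    exact tendsto_nhds_unique h4 h5
  have hP₀sa : IsSelfAdjoint P₀ := by
    have h1 : Filter.Tendsto (fun n => star (Pseq n)) Filter.atTop (nhds (star P₀)) := hP₀.star
    have h2 : (fun n => star (Pseq n)) = Pseq := funext fun n => (hpesa _ (hapos n)).star_eq
    rw [h2] at h1
    exact tendsto_nhds_unique h1 hP₀
  have hP₀eq : ∀ x : F, P₀ x = ⟪ψ, x⟫ • ψ := by
    intro x
    have h1 : T (P₀ x) = 0 := by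
      have h2 := congrArg (fun (A : F →L[ℝ] F) => A x) hTP₀
      simpa [ContinuousLinearMap.mul_apply] using h2
    obtain ⟨cc, hcc⟩ := hsimple _ h1
    have h2 : ⟪ψ, P₀ x⟫ = cc := by
      rw [hcc, real_inner_smul_right, real_inner_self_eq_norm_sq, hψ]; ring
    have h3 : ⟪ψ, P₀ x⟫ = ⟪ψ, x⟫ := by
      rw [← symm_inner hP₀sa ψ x, hP₀ψ]
    rw [hcc, ← h3, h2]
  have hpeP₀ : ∀ ε : ℝ, 0 < ε → ‖pe ε - P₀‖ ≤ ε / g := by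
    intro ε hε
    have h1 : Filter.Tendsto (fun n => ‖pe ε - Pseq n‖) Filter.atTop (nhds ‖pe ε - P₀‖) :=
      (tendsto_const_nhds.sub hP₀).norm
    have h2 : Filter.Tendsto (fun n => |ε - aseq n| / g) Filter.atTop (nhds (ε / g)) := by
      have h3 : Filter.Tendsto (fun n => |ε - aseq n|) Filter.atTop (nhds |ε - 0|) :=
        (tendsto_const_nhds.sub hatend).abs
      rw [sub_zero, abs_of_pos hε] at h3
      exact h3.div_const g
    exact le_of_tendsto_of_tendsto' h1 h2 fun n => hpediff _ _ hε (hapos n)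
  -- lower bound on the orthogonal complement
  have hbelow : ∀ y : F, ⟪ψ, y⟫ = 0 → g / 4 * ‖y‖ ≤ ‖T y‖ := by
    intro y hy
    have hε : (0:ℝ) < g / 2 := by linarith
    have hP₀y : P₀ y = 0 := by rw [hP₀eq y, hy, zero_smul]
    have h1 : ‖pe (g / 2) y‖ ≤ g / 2 / g * ‖y‖ := by
      have heq : pe (g / 2) y = (pe (g / 2) - P₀) y := by
        rw [ContinuousLinearMap.sub_apply, hP₀y, sub_zero]
      rw [heq]
      calc ‖(pe (g / 2) - P₀) y‖ ≤ ‖pe (g / 2) - P₀‖ * ‖y‖ := ContinuousLinearMap.le_opNorm _ _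
        _ ≤ g / 2 / g * ‖y‖ := mul_le_mul_of_nonneg_right (hpeP₀ _ hε) (norm_nonneg _)
    have h2 : y - pe (g / 2) y = Re (g / 2) (T y) := by
      have h3 := hReL (g / 2) hε
      rw [mul_add, mul_smul_comm, mul_one] at h3
      have h4 : Re (g / 2) * T = 1 - (g / 2) • Re (g / 2) := by
        rw [← h3]; abel
      have hop : (1:F →L[ℝ] F) - pe (g / 2) = Re (g / 2) * T := by
        rw [h4, hpe]
      calc y - pe (g / 2) y = ((1:F →L[ℝ] F) - pe (g / 2)) y := by
            rw [ContinuousLinearMap.sub_apply, ContinuousLinearMap.one_apply]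
        _ = (Re (g / 2) * T) y := by rw [hop]
        _ = Re (g / 2) (T y) := ContinuousLinearMap.mul_apply _ _ _
    have h3 : ‖y - pe (g / 2) y‖ ≤ 1 / (g / 2) * ‖T y‖ := by
      rw [h2]
      calc ‖Re (g / 2) (T y)‖ ≤ ‖Re (g / 2)‖ * ‖T y‖ := ContinuousLinearMap.le_opNorm _ _
        _ ≤ 1 / (g / 2) * ‖T y‖ := mul_le_mul_of_nonneg_right (hRenorm _ hε) (norm_nonneg _)
    have h4 : ‖y‖ ≤ ‖pe (g / 2) y‖ + ‖y - pe (g / 2) y‖ := by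
      have h5 : y = pe (g / 2) y + (y - pe (g / 2) y) := by abel
      calc ‖y‖ = ‖pe (g / 2) y + (y - pe (g / 2) y)‖ := by rw [← h5]
        _ ≤ _ := norm_add_le _ _
    have h5 : g / 2 / g = 1 / 2 := by field_simp
    have h6 : 1 / (g / 2) = 2 / g := by rw [one_div_div]
    rw [h5] at h1
    rw [h6] at h3
    have h7 : 1 / 2 * ‖y‖ ≤ 2 / g * ‖T y‖ := by linarith
    have h8 : g / 2 * (1 / 2 * ‖y‖) ≤ g / 2 * (2 / g * ‖T y‖) :=
      mul_le_mul_of_nonneg_left h7 (by positivity)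
    have h9 : g / 2 * (2 / g * ‖T y‖) = ‖T y‖ := by
      field_simp
    linarith
  -- restrict to the orthogonal complement of ψ
  intro y hy
  set K := (ℝ ∙ ψ)ᗮ with hK
  have hmemK : ∀ z : F, z ∈ K ↔ ⟪ψ, z⟫ = 0 := fun z =>
    Submodule.mem_orthogonal_singleton_iff_inner_right
  have hTK : ∀ z ∈ K, T z ∈ K := by
    intro z hz
    rw [hmemK]
    rw [← symm_inner hT ψ z, hTψ, inner_zero_left]
  haveI hKcomplete : CompleteSpace K := (Submodule.isClosed_orthogonal _).completeSpace_coe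
  set C : K →L[ℝ] K := (T.comp K.subtypeL).codRestrict K (fun z => hTK z z.2) with hC
  have hCcoe : ∀ z : K, (C z : F) = T z := fun z => rfl
  have hCsa : IsSelfAdjoint C := by
    rw [ContinuousLinearMap.isSelfAdjoint_iff_isSymmetric]
    intro z w
    show (inner ℝ (C z) w : ℝ) = inner ℝ z (C w)
    rw [Submodule.coe_inner, Submodule.coe_inner, hCcoe, hCcoe]
    exact symm_inner hT z w
  have hCspec : ∀ μ ∈ spectrum ℝ C, g ≤ μ := by
    intro μ hμ
    have hμ0 : μ ≠ 0 := by
      intro h0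
      rw [h0, spectrum.mem_iff] at hμ
      apply hμ
      have hcoer : ∀ z : K, g / 4 * ‖z‖ ≤ ‖C z‖ := by
        intro z
        have h1 := hbelow (z : F) ((hmemK _).mp z.2)
        calc g / 4 * ‖z‖ = g / 4 * ‖(z : F)‖ := by rw [Submodule.coe_norm]
          _ ≤ ‖T (z : F)‖ := h1
          _ = ‖C z‖ := by rw [← hCcoe z, ← Submodule.coe_norm]
      have h2 : IsUnit C := isUnit_of_norm_coercive hCsa (by positivity) hcoer
      have h3 : algebraMap ℝ (K →L[ℝ] K) 0 - C = -C := by rw [map_zero, zero_sub]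
      rw [h3]
      exact h2.neg
    have hμT : μ ∈ spectrum ℝ T := by
      rw [spectrum.mem_iff]
      apply not_isUnit_of_approx
      intro δ hδ
      have hnu : ¬ IsUnit (algebraMap ℝ (K →L[ℝ] K) μ - C) := spectrum.mem_iff.mp hμ
      have hsa2 : IsSelfAdjoint (algebraMap ℝ (K →L[ℝ] K) μ - C) := by
        rw [ContinuousLinearMap.isSelfAdjoint_iff_isSymmetric]
        intro z w
        simp only [ContinuousLinearMap.coe_coe, Algebra.algebraMap_eq_smul_one,
          ContinuousLinearMap.sub_apply, ContinuousLinearMap.smul_apply,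
          ContinuousLinearMap.one_apply, inner_sub_left, inner_sub_right,
          real_inner_smul_left, real_inner_smul_right]
        rw [symm_inner hCsa z w]
      obtain ⟨z, hz1, hz2⟩ := exists_approx_of_not_isUnit hsa2 hnu hδ
      refine ⟨(z : F), by rw [← Submodule.coe_norm]; exact hz1, ?_⟩
      have h4 : (algebraMap ℝ (F →L[ℝ] F) μ - T) (z : F) = μ • (z : F) - T (z : F) := by
        simp [Algebra.algebraMap_eq_smul_one, ContinuousLinearMap.sub_apply,
          ContinuousLinearMap.smul_apply, ContinuousLinearMap.one_apply]
      have h5 : ((algebraMap ℝ (K →L[ℝ] K) μ - C) z : F) = μ • (z : F) - T (z : F) := by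
        simp [Algebra.algebraMap_eq_smul_one, ContinuousLinearMap.sub_apply,
          ContinuousLinearMap.smul_apply, ContinuousLinearMap.one_apply, hCcoe]
      have h6 : ‖(algebraMap ℝ (F →L[ℝ] F) μ - T) (z : F)‖
          = ‖(algebraMap ℝ (K →L[ℝ] K) μ - C) z‖ := by
        rw [h4, Submodule.coe_norm, h5]
      rw [h6]
      exact hz2
    rcases hTspec μ hμT with h | h
    · exact absurd h hμ0
    · exact h
  set z : K := ⟨y, (hmemK y).mpr hy⟩ with hz
  have hfinal := form_ge_of_spectrum_ge hCsa hCspec z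
  rw [Submodule.coe_inner, hCcoe z] at hfinal
  have hco : (z : F) = y := rfl
  rw [hco] at hfinal
  have hn : ‖z‖ = ‖y‖ := by rw [Submodule.coe_norm, hco]
  rw [hn] at hfinal
  exact hfinal

end ThirringAux


/-- **Thirring's inequality.** Let `H` be self-adjoint on a Hilbert space with
lowest spectral point `E₁ = min σ(H)` a simple eigenvalue with normalized
eigenvector `ψ`, and `E₂ = inf (σ(H) \ {E₁}) > E₁`. If `V` is a positive
invertible operator with `⟪ψ, V⁻¹ ψ⟫ > 0`, then
`min (E₁ + ⟪ψ, V⁻¹ ψ⟫⁻¹) E₂ ≤ inf σ(H + V)`. -/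
theorem thirring_inequality
    {E : Type*} [NormedAddCommGroup E] [InnerProductSpace ℝ E] [CompleteSpace E]
    (H V Vinv : E →L[ℝ] E) (hH : IsSelfAdjoint H) (hV : IsSelfAdjoint V)
    (hVpos : ∀ x : E, 0 ≤ ⟪x, V x⟫)
    (hVinv₁ : V.comp Vinv = ContinuousLinearMap.id ℝ E)
    (hVinv₂ : Vinv.comp V = ContinuousLinearMap.id ℝ E)
    (E₁ E₂ : ℝ) (hE₁ : E₁ = sInf (spectrum ℝ H))
    (hE₂ : E₂ = sInf (spectrum ℝ H \ {E₁})) (hgap : E₁ < E₂)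
    (ψ : E) (hψnorm : ‖ψ‖ = 1) (hψeig : H ψ = E₁ • ψ)
    (hsimple : ∀ φ : E, H φ = E₁ • φ → ∃ c : ℝ, φ = c • ψ)
    (hpos : 0 < ⟪ψ, Vinv ψ⟫) :
    min (E₁ + (⟪ψ, Vinv ψ⟫)⁻¹) E₂ ≤ sInf (spectrum ℝ (H + V)) := by
  classical
  have hψne : ψ ≠ 0 := by
    intro h
    rw [h, norm_zero] at hψnorm
    exact one_ne_zero hψnorm.symm
  haveI : Nontrivial E := ⟨⟨ψ, 0, hψne⟩⟩
  have hVVinv : ∀ w : E, V (Vinv w) = w := by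
    intro w
    have h1 := DFunLike.congr_fun hVinv₁ w
    simpa [ContinuousLinearMap.comp_apply] using h1
  have hHsymm := ThirringAux.symm_inner hH
  have hVsymm := ThirringAux.symm_inner hV
  have hbddσ : BddBelow (spectrum ℝ H) := by
    refine ⟨-‖H‖, fun a ha => ?_⟩
    have h1 := spectrum.norm_le_norm_of_mem ha
    rw [Real.norm_eq_abs] at h1
    linarith [neg_abs_le a]
  have hE₁le : ∀ μ ∈ spectrum ℝ H, E₁ ≤ μ := by
    intro μ hμ
    rw [hE₁]
    exact csInf_le hbddσ hμ
  have hE₁mem : E₁ ∈ spectrum ℝ H := by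
    rw [spectrum.mem_iff]
    intro hu
    have happ : (algebraMap ℝ (E →L[ℝ] E) E₁ - H) ψ = 0 := by
      rw [Algebra.algebraMap_eq_smul_one, ContinuousLinearMap.sub_apply,
        ContinuousLinearMap.smul_apply, ContinuousLinearMap.one_apply, hψeig, sub_self]
    obtain ⟨u, hu'⟩ := hu
    have h1 : ((↑u⁻¹ : E →L[ℝ] E) * ↑u) ψ = ψ := by
      rw [u.inv_mul, ContinuousLinearMap.one_apply]
    rw [ContinuousLinearMap.mul_apply, hu', happ, map_zero] at h1
    exact hψne h1.symm
  have hgapσ : ∀ μ ∈ spectrum ℝ H, μ = E₁ ∨ E₂ ≤ μ := by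
    intro μ hμ
    by_cases h : μ = E₁
    · exact Or.inl h
    · refine Or.inr ?_
      rw [hE₂]
      exact csInf_le (hbddσ.mono Set.diff_subset) ⟨hμ, h⟩
  have hformH : ∀ x : E, E₁ * ‖x‖ ^ 2 ≤ ⟪x, H x⟫ :=
    ThirringAux.form_ge_of_spectrum_ge hH hE₁le
  set D : E →L[ℝ] E := H - E₁ • 1 with hD
  have hDapp : ∀ x : E, D x = H x - E₁ • x := by
    intro x
    rw [hD, ContinuousLinearMap.sub_apply, ContinuousLinearMap.smul_apply,
      ContinuousLinearMap.one_apply]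
  have hDsa : IsSelfAdjoint D :=
    hH.sub (IsSelfAdjoint.smul (star_trivial E₁) (IsSelfAdjoint.one (E →L[ℝ] E)))
  have hDform : ∀ x : E, 0 ≤ ⟪x, D x⟫ := by
    intro x
    rw [hDapp, inner_sub_right, real_inner_smul_right, real_inner_self_eq_norm_sq]
    linarith [hformH x]
  have hDψ : D ψ = 0 := by rw [hDapp, hψeig, sub_self]
  have hDunit : ∀ t : ℝ, t ≠ 0 → t < E₂ - E₁ → IsUnit (D - t • (1 : E →L[ℝ] E)) := by
    intro t ht hlt
    have hnot : (E₁ + t) ∉ spectrum ℝ H := by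
      intro hmem
      rcases hgapσ _ hmem with h | h
      · exact ht (by linarith)
      · linarith
    rw [spectrum.notMem_iff] at hnot
    have heq : D - t • (1 : E →L[ℝ] E) = -(algebraMap ℝ (E →L[ℝ] E) (E₁ + t) - H) := by
      rw [Algebra.algebraMap_eq_smul_one, neg_sub, hD, sub_sub, ← add_smul]
    rw [heq]
    exact hnot.neg
  have hDsimple : ∀ φ : E, D φ = 0 → ∃ c : ℝ, φ = c • ψ := by
    intro φ hφ
    apply hsimple
    rw [hDapp] at hφ
    exact sub_eq_zero.mp hφ
  have hgapform := ThirringAux.gap_form_bound hDsa (show (0:ℝ) < E₂ - E₁ by linarith)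
    hDform hDunit hψnorm hDψ hDsimple
  have hyform : ∀ y : E, ⟪ψ, y⟫ = 0 → E₂ * ‖y‖ ^ 2 ≤ ⟪y, H y⟫ := by
    intro y hy
    have h1 := hgapform y hy
    rw [hDapp, inner_sub_right, real_inner_smul_right, real_inner_self_eq_norm_sq] at h1
    nlinarith [h1]
  have hCSV : ∀ x : E, ⟪ψ, x⟫ ^ 2 ≤ ⟪ψ, Vinv ψ⟫ * ⟪x, V x⟫ := by
    intro x
    have hcs := ThirringAux.form_cauchy_schwarz hV hVpos (Vinv ψ) x
    have h1 : ⟪Vinv ψ, V x⟫ = ⟪ψ, x⟫ := by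
      rw [← hVsymm (Vinv ψ) x, hVVinv]
    have h2 : ⟪Vinv ψ, V (Vinv ψ)⟫ = ⟪ψ, Vinv ψ⟫ := by
      rw [hVVinv]
      exact real_inner_comm _ _
    rw [h1, h2] at hcs
    exact hcs
  have hdec : ∀ x : E, min (E₁ + (⟪ψ, Vinv ψ⟫)⁻¹) E₂ * ‖x‖ ^ 2 ≤ ⟪x, (H + V) x⟫ := by
    intro x
    set c := ⟪ψ, x⟫ with hc
    set y := x - c • ψ with hy
    have hψψ : ⟪ψ, ψ⟫ = 1 := by
      rw [real_inner_self_eq_norm_sq, hψnorm]; norm_num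
    have hyperp : ⟪ψ, y⟫ = 0 := by
      rw [hy, inner_sub_right, real_inner_smul_right, hψψ, mul_one, ← hc, sub_self]
    have hyψ : ⟪y, ψ⟫ = 0 := by rw [real_inner_comm]; exact hyperp
    have hxsum : x = c • ψ + y := by rw [hy]; abel
    have hpyth : ‖x‖ ^ 2 = c ^ 2 + ‖y‖ ^ 2 := by
      have h1 : ‖x‖ ^ 2 = ⟪x, x⟫ := (real_inner_self_eq_norm_sq x).symm
      rw [h1]
      conv_lhs => rw [hxsum]
      rw [real_inner_add_add_self]
      simp only [real_inner_smul_left, real_inner_smul_right]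
      rw [hψψ, hyperp, real_inner_self_eq_norm_sq]
      ring
    have hψHy : ∀ w : E, ⟪ψ, w⟫ = 0 → ⟪ψ, H w⟫ = 0 := by
      intro w hw
      rw [← hHsymm ψ w, hψeig, real_inner_smul_left, hw, mul_zero]
    have hHdec : c ^ 2 * E₁ + E₂ * ‖y‖ ^ 2 ≤ ⟪x, H x⟫ := by
      have hyH := hyform y hyperp
      have h2 : ⟪ψ, H y⟫ = 0 := hψHy y hyperp
      have h3 : ⟪y, H ψ⟫ = 0 := by
        rw [hψeig, real_inner_smul_right, hyψ, mul_zero]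
      have hψHψ : ⟪ψ, H ψ⟫ = E₁ := by
        rw [hψeig, real_inner_smul_right, hψψ, mul_one]
      have hexp : ⟪x, H x⟫ = c ^ 2 * E₁ + ⟪y, H y⟫ := by
        conv_lhs => rw [hxsum]
        rw [map_add, map_smul, inner_add_left, inner_add_right, inner_add_right]
        simp only [real_inner_smul_left, real_inner_smul_right]
        rw [h2, h3, hψHψ]
        ring
      rw [hexp]
      linarith
    have hVdec : c ^ 2 * (⟪ψ, Vinv ψ⟫)⁻¹ ≤ ⟪x, V x⟫ := by
      have h1 := hCSV x
      rw [← hc] at h1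
      have h2 : c ^ 2 * (⟪ψ, Vinv ψ⟫)⁻¹ = c ^ 2 / ⟪ψ, Vinv ψ⟫ := (div_eq_mul_inv _ _).symm
      rw [h2, div_le_iff₀ hpos]
      linarith [h1]
    have hHV : ⟪x, (H + V) x⟫ = ⟪x, H x⟫ + ⟪x, V x⟫ := by
      rw [ContinuousLinearMap.add_apply, inner_add_right]
    rw [hHV, hpyth]
    have hm1 : min (E₁ + (⟪ψ, Vinv ψ⟫)⁻¹) E₂ ≤ E₁ + (⟪ψ, Vinv ψ⟫)⁻¹ := min_le_left _ _
    have hm2 : min (E₁ + (⟪ψ, Vinv ψ⟫)⁻¹) E₂ ≤ E₂ := min_le_right _ _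
    nlinarith [sq_nonneg c, sq_nonneg ‖y‖, hHdec, hVdec, hm1, hm2]
  have hHVsa : IsSelfAdjoint (H + V) := hH.add hV
  have hspecHV := ThirringAux.spectrum_ge_of_form_ge hHVsa hdec
  obtain ⟨m₀, hm₀, -⟩ := ThirringAux.exists_inf_form_mem_spectrum hHVsa
  exact le_csInf ⟨m₀, hm₀⟩ hspecHV
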